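/- Let (X_1, X_2) be a bivariate centered Gaussian vector with unit variances and correlation ρ ∈ (−1,1). Then E[(X_1² − 1) · 1_{X_1 ≥ 0, X_2 ≥ 0}] = φ(0)² ρ √(1−ρ²) and E[(X_1 X_2 − ρ) · 1_{X_1 ≥ 0, X_2 ≥ 0}] = φ(0)² √(1−ρ²). -/

import Mathlib

/-!
Write `X₁ = Y₁`, `X₂ = a Y₁ + t Y₂` with `t > 0`. Given `Y₁ = x ≥ 0`, the event `X₂ ≥ 0` is the
half-line `Y₂ ≥ -s x` with `s = a / t`, on which the Gaussian mass `Ψ(-s x)` and the first moment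
`φ(s x)` are explicit. Stein's identity `∫₀^∞ (x² - 1) φ(x) g(x) dx = ∫₀^∞ x φ(x) g'(x) dx`
with `g(x) = Ψ(-s x)` reduces the first expectation to `s ∫₀^∞ x φ(x) φ(s x) dx`, the second one
to a combination of the same integral, and that integral equals `1 / (2π (1 + s²))`.
-/

open MeasureTheory ProbabilityTheory Real Set
open scoped NNReal

local notation "φ" => gaussianPDFReal 0 1

section GaussianDensity

variable {μ : ℝ} {v : ℝ≥0}

lemma gaussianPDFReal_zero_one_apply (x : ℝ) : φ x = (√(2 * π))⁻¹ * exp (-x ^ 2 / 2) := by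
  simp [gaussianPDFReal]

lemma gaussianPDFReal_zero_one_neg (x : ℝ) : φ (-x) = φ x := by
  simp [gaussianPDFReal_zero_one_apply]

lemma gaussianPDFReal_zero_one_mul_gaussianPDFReal_zero_one_const_mul (s x : ℝ) :
    φ x * φ (s * x) = (2 * π)⁻¹ * exp (-((1 + s ^ 2) / 2) * x ^ 2) := by
  rw [gaussianPDFReal_zero_one_apply, gaussianPDFReal_zero_one_apply, mul_mul_mul_comm, ← mul_inv,
    mul_self_sqrt (by positivity), ← exp_add]
  ring_nf

lemma hasDerivAt_gaussianPDFReal (μ : ℝ) (v : ℝ≥0) (x : ℝ) :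
    HasDerivAt (gaussianPDFReal μ v) (-(x - μ) / v * gaussianPDFReal μ v x) x := by
  have h : HasDerivAt (fun y => -(y - μ) ^ 2 / (2 * v)) (-(x - μ) / v) x :=
    ((((hasDerivAt_id x).sub_const μ).pow 2).neg.div_const (2 * (v : ℝ))).congr_deriv
      (by simp only [id]; ring)
  exact (h.exp.const_mul (√(2 * π * v))⁻¹).congr_deriv (by rw [gaussianPDFReal]; ring)

lemma continuous_gaussianPDFReal (μ : ℝ) (v : ℝ≥0) : Continuous (gaussianPDFReal μ v) :=
  continuous_iff_continuousAt.2 fun x => (hasDerivAt_gaussianPDFReal μ v x).continuousAt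

lemma integrable_gaussianReal_iff (hv : v ≠ 0) {f : ℝ → ℝ} :
    Integrable f (gaussianReal μ v) ↔ Integrable (fun x => gaussianPDFReal μ v x * f x) := by
  rw [gaussianReal_of_var_ne_zero _ hv, integrable_withDensity_iff_integrable_smul'
    (measurable_gaussianPDF μ v) (ae_of_all _ fun _ => gaussianPDF_lt_top)]
  simp [toReal_gaussianPDF]

lemma setIntegral_gaussianReal (hv : v ≠ 0) (f : ℝ → ℝ) {s : Set ℝ} (hs : MeasurableSet s) :
    ∫ x in s, f x ∂gaussianReal μ v = ∫ x in s, gaussianPDFReal μ v x * f x := by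
  rw [← integral_indicator hs, integral_gaussianReal_eq_integral_smul hv,
    ← integral_indicator hs]
  congr 1 with x
  by_cases hx : x ∈ s <;> simp [hx]

lemma hasDerivAt_gaussianReal_real_Ici (hv : v ≠ 0) (c : ℝ) :
    HasDerivAt (fun c => (gaussianReal μ v).real (Ici c)) (-gaussianPDFReal μ v c) c := by
  have hint := (integrable_gaussianPDFReal μ v).integrableOn (s := Ioi 0)
  have h : ∀ c, (gaussianReal μ v).real (Ici c)
      = (∫ y in Ioi 0, gaussianPDFReal μ v y) - ∫ y in (0)..c, gaussianPDFReal μ v y := by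
    intro c
    calc (gaussianReal μ v).real (Ici c) = ∫ _ in Ici c, (1 : ℝ) ∂gaussianReal μ v := by simp
      _ = ∫ y in Ioi c, gaussianPDFReal μ v y := by
        rw [setIntegral_gaussianReal hv _ measurableSet_Ici, integral_Ici_eq_integral_Ioi]
        simp
      _ = _ := by
        rw [← intervalIntegral.integral_interval_add_Ioi
          (integrable_gaussianPDFReal μ v).integrableOn hint, intervalIntegral.integral_symm]
        ring
  simp_rw [h]
  exact (((continuous_gaussianPDFReal μ v).integral_hasStrictDerivAt 0 c).hasDerivAt).const_sub _

end GaussianDensity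

lemma integrable_gaussianPDFReal_zero_one_mul_id : Integrable (fun x => φ x * x) :=
  (integrable_gaussianReal_iff one_ne_zero).1 ((memLp_id_gaussianReal 1).integrable le_rfl)

lemma integrable_gaussianPDFReal_zero_one_mul_sq_sub_one :
    Integrable (fun x => φ x * (x ^ 2 - 1)) :=
  (integrable_gaussianReal_iff one_ne_zero).1
    ((memLp_id_gaussianReal 2).integrable_sq.sub (integrable_const 1))

lemma setIntegral_Ici_id_gaussianReal (c : ℝ) : ∫ y in Ici c, y ∂gaussianReal 0 1 = φ c := by
  have hderiv : ∀ y, HasDerivAt (fun y => -φ y) (φ y * y) y := fun y =>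
    (hasDerivAt_gaussianPDFReal 0 1 y).neg.congr_deriv (by simp; ring)
  have hint : IntegrableOn (fun y => φ y * y) (Ioi c) :=
    integrable_gaussianPDFReal_zero_one_mul_id.integrableOn
  have hlim := tendsto_zero_of_hasDerivAt_of_integrableOn_Ioi (fun y _ => hderiv y) hint
    (integrable_gaussianPDFReal 0 1).neg.integrableOn
  rw [setIntegral_gaussianReal one_ne_zero _ measurableSet_Ici, integral_Ici_eq_integral_Ioi,
    integral_Ioi_of_hasDerivAt_of_tendsto' (fun y _ => hderiv y) hint hlim]
  ring

/-- Stein's identity on a half-line. The boundary term at `+∞` vanishes because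
`x φ(x) g(x)` and its derivative are integrable. -/
lemma integral_Ioi_gaussianPDFReal_zero_one_mul_sq_sub_one_mul {g g' : ℝ → ℝ} {C : ℝ}
    (hg : ∀ x, HasDerivAt g (g' x) x) (hgC : ∀ x, |g x| ≤ C) (a : ℝ)
    (hg' : IntegrableOn (fun x => φ x * (x * g' x)) (Ioi a)) :
    ∫ x in Ioi a, φ x * ((x ^ 2 - 1) * g x)
      = a * φ a * g a + ∫ x in Ioi a, φ x * (x * g' x) := by
  have hg_meas : AEStronglyMeasurable g :=
    (continuous_iff_continuousAt.2 fun x => (hg x).continuousAt).aestronglyMeasurable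
  have hbound : ∀ᵐ x, ‖g x‖ ≤ C := ae_of_all _ hgC
  have hint : Integrable (fun x => φ x * ((x ^ 2 - 1) * g x)) := by
    simpa only [mul_assoc] using
      integrable_gaussianPDFReal_zero_one_mul_sq_sub_one.mul_bdd hg_meas hbound
  have hF_int : IntegrableOn (fun x => φ x * (x * g x)) (Ioi a) := by
    simpa only [mul_assoc] using
      (integrable_gaussianPDFReal_zero_one_mul_id.mul_bdd hg_meas hbound).integrableOn
  have hF : ∀ x, HasDerivAt (fun x => φ x * (x * g x))
      (φ x * (x * g' x) - φ x * ((x ^ 2 - 1) * g x)) x := fun x =>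
    ((hasDerivAt_gaussianPDFReal 0 1 x).mul ((hasDerivAt_id x).mul (hg x))).congr_deriv
      (by simp; ring)
  have hF' := hg'.sub hint.integrableOn
  have hlim := tendsto_zero_of_hasDerivAt_of_integrableOn_Ioi (fun x _ => hF x) hF' hF_int
  have h := integral_Ioi_of_hasDerivAt_of_tendsto' (fun x _ => hF x) hF' hlim
  rw [integral_sub hg' hint.integrableOn] at h
  linarith

lemma integrable_gaussianPDFReal_zero_one_mul_mul_gaussianPDFReal_zero_one (s : ℝ) :
    Integrable (fun x => φ x * (x * φ (s * x))) := by
  have hb : 0 < (1 + s ^ 2) / 2 := by positivity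
  refine ((integrable_mul_exp_neg_mul_sq hb).const_mul (2 * π)⁻¹).congr (ae_of_all _ fun x => ?_)
  simp only
  rw [mul_left_comm (φ x), gaussianPDFReal_zero_one_mul_gaussianPDFReal_zero_one_const_mul]
  ring

lemma integral_Ioi_gaussianPDFReal_zero_one_mul_mul_gaussianPDFReal_zero_one (s : ℝ) :
    ∫ x in Ioi 0, φ x * (x * φ (s * x)) = (2 * π)⁻¹ * (1 + s ^ 2)⁻¹ := by
  have hb : 0 < (1 + s ^ 2) / 2 := by positivity
  have h := integral_rpow_mul_exp_neg_mul_rpow (p := 2) (q := 1) two_pos (by norm_num) hb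
  norm_num at h
  have hpt : ∀ x, φ x * (x * φ (s * x))
      = (2 * π)⁻¹ * (x * exp (-((1 + s ^ 2) / 2 * x ^ 2))) := fun x => by
    rw [mul_left_comm (φ x), gaussianPDFReal_zero_one_mul_gaussianPDFReal_zero_one_const_mul,
      neg_mul]
    ring
  simp_rw [hpt, integral_const_mul, h, rpow_neg_one]
  field_simp

lemma setIntegral_prod_setOf_le {α E : Type*} [MeasurableSpace α] [NormedAddCommGroup E]
    [NormedSpace ℝ E] {μ : Measure α} {ν : Measure ℝ} [SFinite μ] [SFinite ν] {s : Set α}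
    (hs : MeasurableSet s) {g : α → ℝ} (hg : Measurable g) {f : α × ℝ → E}
    (hf : Integrable f (μ.prod ν)) :
    ∫ p in {p : α × ℝ | p.1 ∈ s ∧ g p.1 ≤ p.2}, f p ∂μ.prod ν
      = ∫ x in s, ∫ y in Ici (g x), f (x, y) ∂ν ∂μ := by
  have hS : MeasurableSet {p : α × ℝ | p.1 ∈ s ∧ g p.1 ≤ p.2} :=
    (measurable_fst hs).inter (measurableSet_le (hg.comp measurable_fst) measurable_snd)
  rw [← integral_indicator hS, integral_prod _ (hf.indicator hS), ← integral_indicator hs]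
  congr 1 with x
  by_cases hx : x ∈ s
  · rw [indicator_of_mem hx, ← integral_indicator measurableSet_Ici]
    congr 1 with y
    simp only [indicator, mem_ofPred_eq, mem_Ici, hx, true_and]
  · simp [hx]

section Wedge

variable {a t : ℝ}

lemma setIntegral_gaussianReal_prod_wedge (ht : 0 < t) {f : ℝ × ℝ → ℝ}
    (hf : Integrable f ((gaussianReal 0 1).prod (gaussianReal 0 1))) :
    ∫ p in {p : ℝ × ℝ | 0 ≤ p.1 ∧ 0 ≤ a * p.1 + t * p.2},
        f p ∂(gaussianReal 0 1).prod (gaussianReal 0 1)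
      = ∫ x in Ioi 0, φ x * ∫ y in Ici (-(a / t * x)), f (x, y) ∂gaussianReal 0 1 := by
  have hset : {p : ℝ × ℝ | 0 ≤ p.1 ∧ 0 ≤ a * p.1 + t * p.2}
      = {p | p.1 ∈ Ici 0 ∧ -(a / t * p.1) ≤ p.2} := by
    ext p
    have h : a * p.1 + t * p.2 = t * (p.2 + a / t * p.1) := by field_simp; ring
    rw [mem_ofPred_eq, mem_ofPred_eq, h, mul_nonneg_iff_of_pos_left ht, neg_le_iff_add_nonneg,
      mem_Ici]
  rw [hset, setIntegral_prod_setOf_le (g := fun x => -(a / t * x)) measurableSet_Ici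
      (by fun_prop) hf,
    setIntegral_gaussianReal one_ne_zero _ measurableSet_Ici, integral_Ici_eq_integral_Ioi]

lemma integrable_fst_sq_sub_one {μ μ' : ℝ} {v v' : ℝ≥0} :
    Integrable (fun p : ℝ × ℝ => p.1 ^ 2 - 1) ((gaussianReal μ v).prod (gaussianReal μ' v')) :=
  ((memLp_id_gaussianReal 2).integrable_sq.sub (integrable_const 1)).comp_fst _

lemma integrable_fst_mul_snd {μ μ' : ℝ} {v v' : ℝ≥0} :
    Integrable (fun p : ℝ × ℝ => p.1 * p.2) ((gaussianReal μ v).prod (gaussianReal μ' v')) :=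
  ((memLp_id_gaussianReal 1).integrable le_rfl).mul_prod
    ((memLp_id_gaussianReal 1).integrable le_rfl)

lemma setIntegral_wedge_fst_sq_sub_one (ht : 0 < t) :
    ∫ p in {p : ℝ × ℝ | 0 ≤ p.1 ∧ 0 ≤ a * p.1 + t * p.2},
        (p.1 ^ 2 - 1) ∂(gaussianReal 0 1).prod (gaussianReal 0 1)
      = (2 * π)⁻¹ * (a * t / (a ^ 2 + t ^ 2)) := by
  set s := a / t with hs
  have hg : ∀ x, HasDerivAt (fun x => (gaussianReal 0 1).real (Ici (-(s * x))))
      (s * φ (s * x)) x := fun x =>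
    ((hasDerivAt_gaussianReal_real_Ici one_ne_zero _).comp x
      ((hasDerivAt_id x).const_mul s).neg).congr_deriv
      (by simp [gaussianPDFReal_zero_one_neg, mul_comm])
  have hgC : ∀ x, |(gaussianReal 0 1).real (Ici (-(s * x)))| ≤ 1 := fun x => by
    rw [abs_of_nonneg measureReal_nonneg]
    exact measureReal_le_one
  have hpt : ∀ x, φ x * (x * (s * φ (s * x))) = s * (φ x * (x * φ (s * x))) := fun x => by ring
  have hg' : IntegrableOn (fun x => φ x * (x * (s * φ (s * x)))) (Ioi 0) := by
    simp_rw [hpt]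
    exact ((integrable_gaussianPDFReal_zero_one_mul_mul_gaussianPDFReal_zero_one s).const_mul
      s).integrableOn
  rw [setIntegral_gaussianReal_prod_wedge ht integrable_fst_sq_sub_one]
  simp_rw [setIntegral_const, smul_eq_mul, mul_comm ((gaussianReal 0 1).real _)]
  rw [integral_Ioi_gaussianPDFReal_zero_one_mul_sq_sub_one_mul hg hgC 0 hg']
  simp_rw [hpt]
  rw [integral_const_mul, integral_Ioi_gaussianPDFReal_zero_one_mul_mul_gaussianPDFReal_zero_one,
    hs]
  field_simp
  ring

lemma setIntegral_wedge_fst_mul_snd (ht : 0 < t) :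
    ∫ p in {p : ℝ × ℝ | 0 ≤ p.1 ∧ 0 ≤ a * p.1 + t * p.2},
        p.1 * p.2 ∂(gaussianReal 0 1).prod (gaussianReal 0 1)
      = (2 * π)⁻¹ * (t ^ 2 / (a ^ 2 + t ^ 2)) := by
  rw [setIntegral_gaussianReal_prod_wedge ht integrable_fst_mul_snd]
  have hinner : ∀ x, ∫ y in Ici (-(a / t * x)), x * y ∂gaussianReal 0 1 = x * φ (a / t * x) :=
    fun x => by
      rw [integral_const_mul, setIntegral_Ici_id_gaussianReal, gaussianPDFReal_zero_one_neg]
  simp_rw [hinner]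
  rw [integral_Ioi_gaussianPDFReal_zero_one_mul_mul_gaussianPDFReal_zero_one]
  field_simp
  ring

end Wedge

/-- For a bivariate centered Gaussian `(X₁,X₂)` with unit variances and correlation
`ρ ∈ (−1,1)` — realized as `X₁ = Y₁`, `X₂ = ρY₁ + √(1−ρ²)Y₂` with `Y₁, Y₂` i.i.d.
standard normal — one has
`E[(X₁² − 1) · 1_{X₁ ≥ 0, X₂ ≥ 0}] = φ(0)² ρ √(1−ρ²)` and
`E[(X₁X₂ − ρ) · 1_{X₁ ≥ 0, X₂ ≥ 0}] = φ(0)² √(1−ρ²)`. -/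
theorem stmt11 (ρ : ℝ) (hρ₁ : -1 < ρ) (hρ₂ : ρ < 1) :
    (∫ p in {p : ℝ × ℝ | 0 ≤ p.1 ∧ 0 ≤ ρ * p.1 + Real.sqrt (1 - ρ ^ 2) * p.2},
        (p.1 ^ 2 - 1) ∂((gaussianReal 0 1).prod (gaussianReal 0 1)) =
      (1 / Real.sqrt (2 * Real.pi)) ^ 2 * ρ * Real.sqrt (1 - ρ ^ 2)) ∧
    (∫ p in {p : ℝ × ℝ | 0 ≤ p.1 ∧ 0 ≤ ρ * p.1 + Real.sqrt (1 - ρ ^ 2) * p.2},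
        (p.1 * (ρ * p.1 + Real.sqrt (1 - ρ ^ 2) * p.2) - ρ)
        ∂((gaussianReal 0 1).prod (gaussianReal 0 1)) =
      (1 / Real.sqrt (2 * Real.pi)) ^ 2 * Real.sqrt (1 - ρ ^ 2)) := by
  set t := √(1 - ρ ^ 2)
  have ht : 0 < t := sqrt_pos.2 (by nlinarith)
  have hsum : ρ ^ 2 + t ^ 2 = 1 := by rw [sq_sqrt (by nlinarith)]; ring
  have hφ0 : (1 / √(2 * π)) ^ 2 = (2 * π)⁻¹ := by
    rw [div_pow, one_pow, sq_sqrt (by positivity), one_div]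
  refine ⟨?_, ?_⟩
  · rw [setIntegral_wedge_fst_sq_sub_one ht, hsum, hφ0]
    ring
  · have hsplit : (fun p : ℝ × ℝ => p.1 * (ρ * p.1 + t * p.2) - ρ)
        = fun p => ρ * (p.1 ^ 2 - 1) + t * (p.1 * p.2) := by
      ext p; ring
    rw [hsplit, integral_add (integrable_fst_sq_sub_one.const_mul ρ).integrableOn
      (integrable_fst_mul_snd.const_mul t).integrableOn, integral_const_mul, integral_const_mul,
      setIntegral_wedge_fst_sq_sub_one ht, setIntegral_wedge_fst_mul_snd ht, hsum, hφ0]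
    linear_combination (2 * π)⁻¹ * t * hsum
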